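/- Let Ω ⊂ ℍₛⁿ be a weakly axially symmetric slice-domain with Ω ∩ ℝⁿ ≠ ∅ (weakly axially symmetric: for every q = x + yI ∈ Ω with x, y ∈ ℝⁿ, I ∈ 𝕊, also x − yI ∈ Ω). Then Ω is self-stem-preserving. -/

import Mathlib

noncomputable section
open Quaternion Matrix

abbrev Hq := Quaternion ℝ

/-- The set of quaternionic imaginary units. -/
def Sph : Set Hq := {I | I ^ 2 = -1}

/-- `Ψ_i^I` applied to a single complex number: `x + y i ↦ x + y I`. -/
def psi (I : Hq) (z : ℂ) : Hq := (z.re : Hq) + z.im • I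

/-- `Ψ_i^I : ℂⁿ → ℂ_Iⁿ`, componentwise. -/
def liftMap {n : ℕ} (I : Hq) (z : Fin n → ℂ) : Fin n → Hq := fun k => psi I (z k)

/-- The weakly slice cone `Hqₛⁿ = ⋃_{I∈𝕊} ℂ_Iⁿ`. -/
def HSn (n : ℕ) : Set (Fin n → Hq) := {q | ∃ I ∈ Sph, ∃ z : Fin n → ℂ, q = liftMap I z}

/-- A point of `ℂⁿ` is real. -/
def isRealPt {n : ℕ} (z : Fin n → ℂ) : Prop := ∀ k, (z k).im = 0

/-- A point of `Hqⁿ` is real. -/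
def isRealH {n : ℕ} (q : Fin n → Hq) : Prop := ∀ k, q k = ((q k).re : Hq)

/-- The lifted path `γ^I = Ψ_i^I ∘ γ`. -/
def liftP {n : ℕ} (γ : C(unitInterval, Fin n → ℂ)) (I : Hq) (t : unitInterval) : Fin n → Hq :=
  liftMap I (γ t)

/-- `𝕊(Ω, γ) = {I ∈ 𝕊 : γ^I ⊂ Ω}`. -/
def SUnits {n : ℕ} (Ω : Set (Fin n → Hq)) (γ : C(unitInterval, Fin n → ℂ)) : Set Hq :=
  {I | I ∈ Sph ∧ ∀ t, liftP γ I t ∈ Ω}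

/-- `𝒫(ℂⁿ, Ω)`: continuous paths starting in `ℝⁿ` with some lift inside `Ω`. -/
def PathsTo {n : ℕ} (Ω : Set (Fin n → Hq)) : Set C(unitInterval, Fin n → ℂ) :=
  {γ | isRealPt (γ 0) ∧ ∃ I, I ∈ SUnits Ω γ}

/-- `F` is a path-slice stem function of `f` on `Ω`:
`f(γ^I(1)) = (1, I)·F(γ)`. -/
def IsStem {n : ℕ} (Ω : Set (Fin n → Hq)) (f : (Fin n → Hq) → Hq)
    (F : C(unitInterval, Fin n → ℂ) → Fin 2 → Hq) : Prop :=
  ∀ γ ∈ PathsTo Ω, ∀ I ∈ SUnits Ω γ, f (liftP γ I 1) = F γ 0 + I * F γ 1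

/-- `f` is path-slice on `Ω`. -/
def IsPathSlice {n : ℕ} (Ω : Set (Fin n → Hq)) (f : (Fin n → Hq) → Hq) : Prop :=
  ∃ F, IsStem Ω f F

/-- `Ω` is real-path-connected. -/
def RealPathConnected {n : ℕ} (Ω : Set (Fin n → Hq)) : Prop :=
  ∀ q ∈ Ω, ∃ γ ∈ PathsTo Ω, ∃ I ∈ SUnits Ω γ, liftP γ I 1 = q

/-- `Ω₂` is `Ω₁`-stem-preserving: (i) every path of `𝒫(ℂⁿ,Ω₁)` has at least two
units in `𝕊(Ω₂,γ)`; (ii) two paths with the same endpoint share `≠ 1` units. -/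
def StemPreserving {n : ℕ} (Ω₁ Ω₂ : Set (Fin n → Hq)) : Prop :=
  (∀ γ ∈ PathsTo Ω₁, ∃ I ∈ SUnits Ω₂ γ, ∃ J ∈ SUnits Ω₂ γ, I ≠ J) ∧
  (∀ α ∈ PathsTo Ω₁, ∀ β ∈ PathsTo Ω₁, α 1 = β 1 →
    ∀ I ∈ SUnits Ω₂ α ∩ SUnits Ω₂ β, ∃ J ∈ SUnits Ω₂ α ∩ SUnits Ω₂ β, J ≠ I)

/-- The formula `((1,I),(1,J))⁻¹ (f(γ^I(1)), f(γ^J(1)))ᵀ`. -/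
def stemFormula {n : ℕ} (f : (Fin n → Hq) → Hq) (γ : C(unitInterval, Fin n → ℂ)) (I J : Hq) :
    Fin 2 → Hq :=
  ((I - J)⁻¹ • !![I, -J; (1 : Hq), -1]).mulVec ![f (liftP γ I 1), f (liftP γ J 1)]

/-- The sub-stem function `F_{Ω₁}^f` (depends only on `Ω₂` and `f`). -/
noncomputable def subStem {n : ℕ} (Ω₂ : Set (Fin n → Hq)) (f : (Fin n → Hq) → Hq)
    (γ : C(unitInterval, Fin n → ℂ)) : Fin 2 → Hq := by
  classical
  exact if h : ∃ p : Hq × Hq, p.1 ∈ SUnits Ω₂ γ ∧ p.2 ∈ SUnits Ω₂ γ ∧ p.1 ≠ p.2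
    then stemFormula f γ h.choose.1 h.choose.2
    else 0

/-- Normalized imaginary part of a quaternion. -/
def imUnit (a : Hq) : Hq := (‖a - (a.re : Hq)‖)⁻¹ • (a - (a.re : Hq))

/-- The map `𝔍 : Hqₛⁿ → 𝕊 ∪ {0}`. -/
noncomputable def Jmap {n : ℕ} (q : Fin n → Hq) : Hq := by
  classical
  exact if h : ∃ k : Fin n, q k ≠ ((q k).re : Hq) then
    imUnit (q ((Finset.univ.filter fun k => q k ≠ ((q k).re : Hq)).min'
      ⟨h.choose, Finset.mem_filter.2 ⟨Finset.mem_univ _, h.choose_spec⟩⟩))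
  else 0

/-- Componentwise complex conjugate of a path. -/
def conjPath {n : ℕ} (γ : C(unitInterval, Fin n → ℂ)) : C(unitInterval, Fin n → ℂ) :=
  ⟨fun t k => star (γ t k),
    continuous_pi fun k => continuous_star.comp ((continuous_apply k).comp γ.continuous)⟩

/-- The point-form sub-stem function `ℱ_{Ω₁}^f : Ω₁ → Hq^{2×1}`. -/
noncomputable def pointStem {n : ℕ} (Ω₁ Ω₂ : Set (Fin n → Hq)) (f : (Fin n → Hq) → Hq)
    (q : Fin n → Hq) : Fin 2 → Hq := by
  classical
  exact if isRealH q then ![f q, 0]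
    else if h : ∃ γ, γ ∈ PathsTo Ω₁ ∧ (∀ t, liftP γ (Jmap q) t ∈ Ω₁) ∧ liftP γ (Jmap q) 1 = q
    then subStem Ω₂ f h.choose
    else 0

/-- The `*`-product of functions: `(f*g)(q) = (f(q), 𝔍(q)f(q)) · ℱ_{Ω₁}^g(q)`. -/
noncomputable def starProd {n : ℕ} (Ω₁ Ω₂ : Set (Fin n → Hq)) (f g : (Fin n → Hq) → Hq)
    (q : Fin n → Hq) : Hq :=
  f q * pointStem Ω₁ Ω₂ g q 0 + (Jmap q * f q) * pointStem Ω₁ Ω₂ g q 1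

/-- The `*`-product on `Hq^{2×1}` coming from `Hq ⊗_ℝ ℂ`. -/
def vstar (p q : Fin 2 → Hq) : Fin 2 → Hq :=
  ![p 0 * q 0 - p 1 * q 1, p 1 * q 0 + p 0 * q 1]

/-- `Ω` is slice-open: a subset of `Hqₛⁿ` all of whose slices are open. -/
def SliceOpen {n : ℕ} (Ω : Set (Fin n → Hq)) : Prop :=
  Ω ⊆ HSn n ∧ ∀ I ∈ Sph, IsOpen {z : Fin n → ℂ | liftMap I z ∈ Ω}

/-- `Ω` is slice-connected. -/
def SliceConnected {n : ℕ} (Ω : Set (Fin n → Hq)) : Prop :=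
  ∀ U V : Set (Fin n → Hq), SliceOpen U → SliceOpen V → Ω ⊆ U ∪ V →
    (Ω ∩ U).Nonempty → (Ω ∩ V).Nonempty → (Ω ∩ U ∩ V).Nonempty

/-- `Ω` is a slice-domain. -/
def SliceDomain {n : ℕ} (Ω : Set (Fin n → Hq)) : Prop :=
  SliceOpen Ω ∧ SliceConnected Ω

/-- `Ω` is self-stem-preserving. -/
def SelfStemPreserving {n : ℕ} (Ω : Set (Fin n → Hq)) : Prop :=
  RealPathConnected Ω ∧ StemPreserving Ω Ω

/-- `Ω` is open in the Euclidean subspace topology of `Hqₛⁿ`. -/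
def EuclideanOpenIn {n : ℕ} (Ω : Set (Fin n → Hq)) : Prop :=
  ∃ U : Set (Fin n → Hq), IsOpen U ∧ Ω = U ∩ HSn n

/-- `Ω` is weakly axially symmetric. -/
def WeaklyAxiallySymmetric {n : ℕ} (Ω : Set (Fin n → Hq)) : Prop :=
  ∀ (x y : Fin n → ℝ) (I : Hq), I ∈ Sph →
    (fun k => (x k : Hq) + y k • I) ∈ Ω → (fun k => (x k : Hq) - y k • I) ∈ Ω

/-! Weak axial symmetry makes `𝕊(Ω, γ)` closed under `I ↦ -I`, and `I ≠ -I`; this gives both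
stem-preservation conditions.

For real-path-connectedness, split `Ω` into the points that can be joined to `ℝⁿ` by a path inside
a single slice, and the rest. A point lying on two slices `ℂ_J` and `ℂ_K` is real or has
`K = ±J`, and conjugation carries paths in `ℂ_K` to paths in `ℂ_{-K}`, so on each slice the two
parts are unions of path components of an open set, hence slice-open. Slice-connectedness and a
real point of `Ω` then force the second part to be empty. -/

theorem IsOpen.isOpen_sep_of_joinedIn {X : Type*} [TopologicalSpace X]
    [LocallyPathConnectedSpace X] {F : Set X} (hF : IsOpen F) {P : X → Prop}
    (hP : ∀ ⦃x y⦄, JoinedIn F x y → P x → P y) : IsOpen {x ∈ F | P x} := by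
  rw [isOpen_iff_mem_nhds]
  rintro x ⟨hx, hPx⟩
  exact Filter.mem_of_superset ((hF.pathComponentIn x).mem_nhds (mem_pathComponentIn_self hx))
    fun y hy => ⟨hy.target_mem, hP hy hPx⟩

section ImaginaryUnits

variable {I J K : Hq}

theorem re_eq_zero_of_mem_sph (hI : I ∈ Sph) : I.re = 0 := by
  have hI' : I ^ 2 = -1 := hI
  have hnorm : normSq I = 1 := by
    refine (pow_eq_one_iff_of_nonneg normSq_nonneg two_ne_zero).1 ?_
    rw [← map_pow, hI', normSq_neg, map_one]
  exact sq_eq_neg_normSq.1 (by rw [hI', hnorm, coe_one])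

theorem ne_zero_of_mem_sph (hI : I ∈ Sph) : I ≠ 0 := by
  rintro rfl
  simp [Sph] at hI

theorem neg_mem_sph (hI : I ∈ Sph) : -I ∈ Sph := by
  simpa only [Sph, Set.mem_ofPred_eq, neg_sq] using hI

theorem ne_neg_of_mem_sph (hI : I ∈ Sph) : I ≠ -I := by
  intro h
  have h2 : (2 : ℝ) • I = 0 := by
    rw [two_smul]; nth_rewrite 2 [h]; exact add_neg_cancel I
  exact ne_zero_of_mem_sph hI ((smul_eq_zero.1 h2).resolve_left two_ne_zero)

theorem eq_or_eq_neg_of_smul_eq_smul (hJ : J ∈ Sph) (hK : K ∈ Sph) {a b : ℝ} (ha : a ≠ 0)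
    (h : a • J = b • K) : J = K ∨ J = -K := by
  have hJc : J = (b / a) • K := by
    rw [div_eq_inv_mul, mul_smul, ← h, smul_smul, inv_mul_cancel₀ ha, one_smul]
  have hc : (b / a) * (b / a) = 1 := by
    have hsq : (b / a) ^ 2 • K ^ 2 = -1 := by
      rw [← smul_pow, ← hJc]; exact hJ
    rw [show K ^ 2 = -1 from hK] at hsq
    simpa [sq] using congrArg QuaternionAlgebra.re hsq
  rcases mul_self_eq_one_iff.1 hc with h1 | h1
  · exact .inl (by rw [hJc, h1, one_smul])
  · exact .inr (by rw [hJc, h1, neg_one_smul])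

end ImaginaryUnits

theorem psi_re {I : Hq} (hI : I ∈ Sph) (a : ℂ) : (psi I a).re = a.re := by
  simp [psi, re_eq_zero_of_mem_sph hI]

theorem psi_eq_psi {J K : Hq} (hJ : J ∈ Sph) (hK : K ∈ Sph) {a b : ℂ} (h : psi J a = psi K b) :
    a.re = b.re ∧ a.im • J = b.im • K := by
  have hre : a.re = b.re := by
    simpa only [psi_re hJ, psi_re hK] using congrArg QuaternionAlgebra.re h
  exact ⟨hre, by simpa [psi, hre] using h⟩

theorem psi_injective {K : Hq} (hK : K ∈ Sph) : Function.Injective (psi K) := fun _ _ h =>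
  have ⟨hre, him⟩ := psi_eq_psi hK hK h
  Complex.ext hre (smul_left_injective ℝ (ne_zero_of_mem_sph hK) him)

section Slices

variable {n : ℕ}

theorem liftMap_injective {K : Hq} (hK : K ∈ Sph) : Function.Injective (liftMap (n := n) K) :=
  fun _ _ h => funext fun k => psi_injective hK (congrFun h k)

theorem liftMap_neg_star (K : Hq) (z : Fin n → ℂ) : liftMap (-K) (star z) = liftMap K z := by
  funext k
  simp [liftMap, psi]

theorem liftMap_ofReal (K : Hq) (x : Fin n → ℝ) :
    liftMap K (fun k => (x k : ℂ)) = fun k => (x k : Hq) := by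
  funext k
  simp [liftMap, psi]

theorem liftMap_eq_liftMap {J K : Hq} (hJ : J ∈ Sph) (hK : K ∈ Sph) {z w : Fin n → ℂ}
    (h : liftMap J z = liftMap K w) :
    isRealPt z ∨ (J = K ∧ z = w) ∨ (J = -K ∧ z = star w) := by
  by_cases hz : isRealPt z
  · exact .inl hz
  obtain ⟨k, hk⟩ := not_forall.1 hz
  rcases eq_or_eq_neg_of_smul_eq_smul hJ hK hk (psi_eq_psi hJ hK (congrFun h k)).2
    with rfl | rfl
  · exact .inr (.inl ⟨rfl, liftMap_injective hJ h⟩)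
  · exact .inr (.inr ⟨rfl, liftMap_injective hJ (by rw [h, liftMap_neg_star])⟩)

def RealJoined (Ω : Set (Fin n → Hq)) (K : Hq) (z : Fin n → ℂ) : Prop :=
  ∃ x, isRealPt x ∧ JoinedIn (liftMap K ⁻¹' Ω) x z

def RealReachable (Ω : Set (Fin n → Hq)) (q : Fin n → Hq) : Prop :=
  ∃ K ∈ Sph, ∃ z, liftMap K z = q ∧ RealJoined Ω K z

variable {Ω : Set (Fin n → Hq)}

theorem realJoined_congr {K : Hq} {y z : Fin n → ℂ} (h : JoinedIn (liftMap K ⁻¹' Ω) y z) :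
    RealJoined Ω K y ↔ RealJoined Ω K z :=
  ⟨fun ⟨x, hx, hxy⟩ => ⟨x, hx, hxy.trans h⟩, fun ⟨x, hx, hxz⟩ => ⟨x, hx, hxz.trans h.symm⟩⟩

theorem RealJoined.neg_star {K : Hq} {z : Fin n → ℂ} (hz : RealJoined Ω K z) :
    RealJoined Ω (-K) (star z) := by
  obtain ⟨x, hx, hxz⟩ := hz
  refine ⟨star x, fun k => by simp [hx k], (hxz.map continuous_star).mono ?_⟩
  rintro _ ⟨y, hy, rfl⟩
  simpa only [Set.mem_preimage, liftMap_neg_star] using hy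

theorem realReachable_liftMap_iff {J : Hq} (hJ : J ∈ Sph) {z : Fin n → ℂ}
    (hz : liftMap J z ∈ Ω) : RealReachable Ω (liftMap J z) ↔ RealJoined Ω J z := by
  refine ⟨?_, fun h => ⟨J, hJ, z, rfl, h⟩⟩
  rintro ⟨K, hK, w, hwz, hw⟩
  rcases liftMap_eq_liftMap hJ hK hwz.symm with hreal | ⟨rfl, rfl⟩ | ⟨rfl, rfl⟩
  · exact ⟨z, hreal, .refl hz⟩
  · exact hw
  · exact hw.neg_star

theorem realReachable_of_isRealH (hΩ : Ω ⊆ HSn n) {q : Fin n → Hq} (hq : q ∈ Ω)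
    (hreal : isRealH q) : RealReachable Ω q := by
  obtain ⟨K, hK, -⟩ := hΩ hq
  have hlift : liftMap K (fun k => ((q k).re : ℂ)) = q := by
    rw [liftMap_ofReal]; exact funext fun k => (hreal k).symm
  exact ⟨K, hK, _, hlift, _, fun k => Complex.ofReal_im _, .refl (by rwa [Set.mem_preimage, hlift])⟩

theorem RealReachable.exists_path {q : Fin n → Hq} (hq : RealReachable Ω q) :
    ∃ γ ∈ PathsTo Ω, ∃ I ∈ SUnits Ω γ, liftP γ I 1 = q := by
  obtain ⟨K, hK, z, rfl, x, hx, hxz⟩ := hq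
  have hK' : K ∈ SUnits Ω hxz.somePath := ⟨hK, hxz.somePath_mem⟩
  refine ⟨hxz.somePath, ⟨?_, K, hK'⟩, K, hK', ?_⟩
  · simpa using hx
  · simp [liftP]

theorem SliceOpen.sep_realReachable (hΩ : SliceOpen Ω) :
    SliceOpen {q ∈ Ω | RealReachable Ω q} ∧ SliceOpen {q ∈ Ω | ¬RealReachable Ω q} := by
  refine ⟨⟨Set.sep_subset _ _ |>.trans hΩ.1, fun J hJ => ?_⟩,
    ⟨Set.sep_subset _ _ |>.trans hΩ.1, fun J hJ => ?_⟩⟩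
  · have hpre : {z | liftMap J z ∈ {q ∈ Ω | RealReachable Ω q}} =
        {z ∈ liftMap J ⁻¹' Ω | RealJoined Ω J z} :=
      Set.ext fun z => and_congr_right (realReachable_liftMap_iff hJ)
    rw [hpre]
    exact (hΩ.2 J hJ).isOpen_sep_of_joinedIn fun y z h => (realJoined_congr h).1
  · have hpre : {z | liftMap J z ∈ {q ∈ Ω | ¬RealReachable Ω q}} =
        {z ∈ liftMap J ⁻¹' Ω | ¬RealJoined Ω J z} :=
      Set.ext fun z => and_congr_right fun hz => not_congr (realReachable_liftMap_iff hJ hz)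
    rw [hpre]
    exact (hΩ.2 J hJ).isOpen_sep_of_joinedIn fun y z h => mt (realJoined_congr h).2

theorem SliceDomain.realReachable (hΩ : SliceDomain Ω) (hR : ∃ q ∈ Ω, isRealH q)
    {q : Fin n → Hq} (hq : q ∈ Ω) : RealReachable Ω q := by
  by_contra hq'
  obtain ⟨p, hp, hpreal⟩ := hR
  obtain ⟨hU, hV⟩ := hΩ.1.sep_realReachable
  obtain ⟨_, ⟨-, -, hrU⟩, -, hrV⟩ := hΩ.2 _ _ hU hV
    (fun q hq => (em (RealReachable Ω q)).imp (⟨hq, ·⟩) (⟨hq, ·⟩))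
    ⟨p, hp, hp, realReachable_of_isRealH hΩ.1.1 hp hpreal⟩ ⟨q, hq, hq, hq'⟩
  exact hrV hrU

theorem SliceDomain.realPathConnected (hΩ : SliceDomain Ω) (hR : ∃ q ∈ Ω, isRealH q) :
    RealPathConnected Ω :=
  fun _ hq => (hΩ.realReachable hR hq).exists_path

theorem WeaklyAxiallySymmetric.neg_mem_SUnits (hsym : WeaklyAxiallySymmetric Ω)
    {γ : C(unitInterval, Fin n → ℂ)} {I : Hq} (hI : I ∈ SUnits Ω γ) : -I ∈ SUnits Ω γ := by
  refine ⟨neg_mem_sph hI.1, fun t => ?_⟩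
  have hlift : liftP γ (-I) t = fun k => ((γ t k).re : Hq) - (γ t k).im • I := by
    funext k
    simp [liftP, liftMap, psi, sub_eq_add_neg]
  rw [hlift]
  exact hsym (fun k => (γ t k).re) (fun k => (γ t k).im) I hI.1 (hI.2 t)

theorem WeaklyAxiallySymmetric.stemPreserving (hsym : WeaklyAxiallySymmetric Ω) :
    StemPreserving Ω Ω :=
  ⟨fun _ ⟨_, I, hI⟩ => ⟨I, hI, -I, hsym.neg_mem_SUnits hI, ne_neg_of_mem_sph hI.1⟩,
    fun _ _ _ _ _ I hI => ⟨-I, ⟨hsym.neg_mem_SUnits hI.1, hsym.neg_mem_SUnits hI.2⟩,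
      (ne_neg_of_mem_sph hI.1.1).symm⟩⟩

end Slices

/-- a weakly axially symmetric slice-domain meeting `ℝⁿ` is
self-stem-preserving. -/
theorem weaklyAxiallySymmetric_selfStemPreserving {n : ℕ} (Ω : Set (Fin n → Hq))
    (hsym : WeaklyAxiallySymmetric Ω) (hΩ : SliceDomain Ω) (hR : ∃ q ∈ Ω, isRealH q) :
    SelfStemPreserving Ω :=
  ⟨hΩ.realPathConnected hR, hsym.stemPreserving⟩
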